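/- Let r ≥ 3 and 1 ≤ s < r with r > s + 1. Then for every i with s + 1 ≤ i ≤ r, the element b_i is a non-Hausdorff element for the action of H̃_r on {0,1}^ℕ. In particular b_r fixes the point (0^{r−s−1}1)^∞ (the infinite repetition of the word consisting of r−s−1 zeros followed by a single 1), b_r does not restrict to the identity on any open neighborhood of this point, and every open neighborhood of this point contains a nonempty open subset on which b_r restricts to the identity. -/
import Mathlib


/-- Prepend the letter `v` to the sequence `x`. -/
def cons (v : Fin 2) (x : ℕ → Fin 2) : ℕ → Fin 2
  | 0 => v
  | n + 1 => x n

/-- Pink's recursive equations for the generators `b₁, …, b_r` of the group `H̃_r`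
(strictly pre-periodic case with pre-period `s`): `b₁(v·w) = (1-v)·w`,
`b_{s+1}(0·w) = 0·b_s(w)`, `b_{s+1}(1·w) = 1·b_r(w)`, and for `2 ≤ i ≤ r` with
`i ≠ s+1`, `b_i(0·w) = 0·b_{i-1}(w)`, `b_i(1·w) = 1·w`. -/
def PinkPreRec (r s : ℕ) (b : ℕ → (ℕ → Fin 2) → (ℕ → Fin 2)) : Prop :=
  (∀ w, b 1 (cons 0 w) = cons 1 w) ∧
  (∀ w, b 1 (cons 1 w) = cons 0 w) ∧
  (∀ w, b (s + 1) (cons 0 w) = cons 0 (b s w)) ∧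
  (∀ w, b (s + 1) (cons 1 w) = cons 1 (b r w)) ∧
  ∀ i, 2 ≤ i → i ≤ r → i ≠ s + 1 →
    (∀ w, b i (cons 0 w) = cons 0 (b (i - 1) w)) ∧ (∀ w, b i (cons 1 w) = cons 1 w)

/-- `g` is a non-Hausdorff element: it fixes a point `x`, is not the identity on any open
neighborhood of `x`, yet every open neighborhood of `x` contains a nonempty open subset
on which `g` is the identity. -/
def IsNonHausdorffElement {X : Type*} [TopologicalSpace X] (g : X → X) : Prop :=
  ∃ x : X, g x = x ∧
    (∀ W : Set X, IsOpen W → x ∈ W → ¬ Set.EqOn g id W) ∧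
    (∀ W : Set X, IsOpen W → x ∈ W → ∃ O : Set X, IsOpen O ∧ O.Nonempty ∧ O ⊆ W ∧
      Set.EqOn g id O)

/-- The point `(0^{r-s-1}1)^∞` of `{0,1}^ℕ`: the infinite repetition of the word
consisting of `r-s-1` zeros followed by a single `1`. -/
def periodicPoint (r s : ℕ) : ℕ → Fin 2 :=
  fun n => if n % (r - s) = r - s - 1 then 1 else 0

namespace PinkAux

lemma cons_zero' (v : Fin 2) (x) : cons v x 0 = v := rfl
lemma cons_succ' (v : Fin 2) (x) (n) : cons v x (n+1) = x n := rfl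

def zcons (k : ℕ) (w : ℕ → Fin 2) : ℕ → Fin 2 := fun n => if n < k then 0 else w (n - k)

lemma zcons_zero (w) : zcons 0 w = w := funext fun n => by simp [zcons]

lemma zcons_lt {k n : ℕ} (h : n < k) (w) : zcons k w n = 0 := if_pos h
lemma zcons_ge {k n : ℕ} (h : k ≤ n) (w) : zcons k w n = w (n - k) := if_neg (by omega)

lemma zcons_succ (k w) : zcons (k+1) w = cons 0 (zcons k w) := by
  funext n
  cases n with
  | zero => rw [zcons_lt (by omega), cons_zero']
  | succ n =>
    rw [cons_succ']
    by_cases h : n < k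
    · rw [zcons_lt (by omega), zcons_lt h]
    · rw [zcons_ge (by omega), zcons_ge (by omega)]
      congr 1
      omega

lemma zc1_lt {d n : ℕ} (h : n < d) (u) : zcons d (cons 1 u) n = 0 := zcons_lt h _
lemma zc1_eq (d u) : zcons d (cons 1 u) d = 1 := by
  rw [zcons_ge le_rfl, Nat.sub_self, cons_zero']
lemma zc1_gt {d n : ℕ} (h : d < n) (u) : zcons d (cons 1 u) n = u (n - d - 1) := by
  rw [zcons_ge (by omega)]
  obtain ⟨t, ht⟩ : ∃ t, n - d = t + 1 := ⟨n - d - 1, by omega⟩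
  rw [ht, cons_succ']
  rfl

lemma bZero (r s b) (hb : PinkPreRec r s b) (j) (h2 : 2 ≤ j) (hjr : j ≤ r) (w) :
    b j (cons 0 w) = cons 0 (b (j - 1) w) := by
  by_cases h : j = s + 1
  · subst h
    have := hb.2.2.1 w
    simpa using this
  · exact (hb.2.2.2.2 j h2 hjr h).1 w

lemma bIter (r s b) (hb : PinkPreRec r s b) :
    ∀ k j, 1 ≤ j → j + k ≤ r → ∀ w, b (j + k) (zcons k w) = zcons k (b j w) := by
  intro k
  induction k with
  | zero => intro j hj hjr w; simp [zcons_zero]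
  | succ k ih =>
    intro j hj hjr w
    have e : j + (k+1) = (j + k) + 1 := by omega
    rw [e, zcons_succ, bZero r s b hb _ (by omega) (by omega), Nat.add_sub_cancel,
      ih j hj (by omega), ← zcons_succ]

lemma b_blk (r s b) (hb : PinkPreRec r s b) (i) (h1 : s + 1 ≤ i) (h2 : i ≤ r) (w) :
    b i (zcons (i - s - 1) (cons 1 w)) = zcons (i - s - 1) (cons 1 (b r w)) := by
  obtain ⟨d, rfl⟩ : ∃ d, i = s + 1 + d := ⟨i - s - 1, by omega⟩
  have hd : s + 1 + d - s - 1 = d := by omega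
  rw [hd, bIter r s b hb d (s+1) (by omega) (by omega), hb.2.2.2.1]

lemma p_lt (r s) (hm : 2 ≤ r - s) {n} (h : n < r - s - 1) : periodicPoint r s n = 0 := by
  unfold periodicPoint
  rw [if_neg]
  rw [Nat.mod_eq_of_lt (by omega)]
  omega

lemma p_eq (r s) (hm : 2 ≤ r - s) : periodicPoint r s (r - s - 1) = 1 := by
  unfold periodicPoint
  rw [if_pos (Nat.mod_eq_of_lt (by omega))]

lemma p_period (r s) (hm : 2 ≤ r - s) {n} (h : r - s ≤ n) :
    periodicPoint r s n = periodicPoint r s (n - (r - s)) := by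
  unfold periodicPoint
  rw [Nat.mod_eq_sub_mod h]

def blk (r s : ℕ) : (ℕ → Fin 2) → (ℕ → Fin 2) := fun w => zcons (r - s - 1) (cons 1 w)

lemma p_blk (r s) (hm : 2 ≤ r - s) :
    zcons (r - s - 1) (cons 1 (periodicPoint r s)) = periodicPoint r s := by
  funext n
  rcases lt_trichotomy n (r - s - 1) with h | h | h
  · rw [zc1_lt h, p_lt r s hm h]
  · subst h; rw [zc1_eq, p_eq r s hm]
  · rw [zc1_gt h, show n - (r - s - 1) - 1 = n - (r - s) from by omega,
      ← p_period r s hm (by omega)]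

lemma b_r_fix (r s b) (hb : PinkPreRec r s b) (hm : 2 ≤ r - s) (hsr : s + 1 < r) :
    b r (periodicPoint r s) = periodicPoint r s := by
  have key : b r (periodicPoint r s)
      = zcons (r - s - 1) (cons 1 (b r (periodicPoint r s))) := by
    conv_lhs => rw [← p_blk r s hm]
    exact b_blk r s b hb r (by omega) le_rfl _
  have main : ∀ n, b r (periodicPoint r s) n = periodicPoint r s n := by
    intro n
    induction n using Nat.strong_induction_on with
    | _ n ih =>
      have kn := congrFun key n
      rcases lt_trichotomy n (r - s - 1) with h | h | h
      · rw [kn, zc1_lt h, p_lt r s hm h]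
      · subst h; rw [kn, zc1_eq, p_eq r s hm]
      · rw [kn, zc1_gt h, show n - (r - s - 1) - 1 = n - (r - s) from by omega,
          ih _ (by omega), ← p_period r s hm (by omega)]
  funext n; exact main n

lemma blk_iter_comm (r s b) (hb : PinkPreRec r s b) (hsr : s + 1 < r) :
    ∀ k w, b r ((blk r s)^[k] w) = (blk r s)^[k] (b r w) := by
  intro k
  induction k with
  | zero => intro w; simp
  | succ k ih =>
    intro w
    rw [Function.iterate_succ_apply', Function.iterate_succ_apply']
    show b r (zcons (r - s - 1) (cons 1 ((blk r s)^[k] w)))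
      = zcons (r - s - 1) (cons 1 ((blk r s)^[k] (b r w)))
    rw [b_blk r s b hb r (by omega) le_rfl, ih]
  
lemma blk_iter_lt (r s) (hm : 2 ≤ r - s) :
    ∀ k w t, t < k * (r - s) → (blk r s)^[k] w t = periodicPoint r s t := by
  intro k
  induction k with
  | zero => intro w t ht; simp at ht
  | succ k ih =>
    intro w t ht
    have hsm : (k + 1) * (r - s) = k * (r - s) + (r - s) := by ring
    rw [Function.iterate_succ_apply']
    show zcons (r - s - 1) (cons 1 ((blk r s)^[k] w)) t = _
    rcases lt_trichotomy t (r - s - 1) with h | h | h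
    · rw [zc1_lt h, p_lt r s hm h]
    · subst h; rw [zc1_eq, p_eq r s hm]
    · rw [zc1_gt h, show t - (r - s - 1) - 1 = t - (r - s) from by omega,
        ih w _ (by omega), ← p_period r s hm (by omega)]

lemma blk_iter_ge (r s) (hm : 2 ≤ r - s) :
    ∀ k w t, (blk r s)^[k] w (k * (r - s) + t) = w t := by
  intro k
  induction k with
  | zero => intro w t; simp
  | succ k ih =>
    intro w t
    have hsm : (k + 1) * (r - s) = k * (r - s) + (r - s) := by ring
    rw [Function.iterate_succ_apply']
    show zcons (r - s - 1) (cons 1 ((blk r s)^[k] w)) _ = _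
    rw [zc1_gt (by omega), show (k + 1) * (r - s) + t - (r - s - 1) - 1
      = k * (r - s) + t from by omega, ih]

lemma cyl {W : Set (ℕ → Fin 2)} (hW : IsOpen W) {x : ℕ → Fin 2} (hx : x ∈ W) :
    ∃ N, ∀ y : ℕ → Fin 2, (∀ n < N, y n = x n) → y ∈ W := by
  obtain ⟨I, u, hu, hsub⟩ := (isOpen_pi_iff.mp hW) x hx
  refine ⟨I.sup id + 1, fun y hy => hsub ?_⟩
  rw [Set.mem_pi]
  intro n hn
  have hnI : n ∈ I := hn
  have : y n = x n := hy n (Nat.lt_succ_of_le (Finset.le_sup (f := id) hnI))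
  rw [this]
  exact (hu n hnI).2

def zfun : ℕ → Fin 2 := fun _ => 0

lemma zfun_eq (k : ℕ) : zfun = zcons k (cons 0 zfun) := by
  funext n
  by_cases h : n < k
  · rw [zcons_lt h]; rfl
  · rw [zcons_ge (by omega)]
    show (0 : Fin 2) = cons 0 zfun (n - k)
    generalize n - k = m
    cases m <;> rfl

lemma bz (r s b) (hb : PinkPreRec r s b) (hr : 3 ≤ r) : b r zfun (r - 1) = 1 := by
  obtain ⟨t, ht⟩ : ∃ t, r = 1 + t := ⟨r - 1, by omega⟩
  have h1 : r - 1 = t := by omega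
  rw [h1, ht, zfun_eq t, bIter r s b hb t 1 le_rfl (by omega), hb.1, zc1_eq]

def tgt (r s d M : ℕ) : ℕ → Fin 2 :=
  fun n => if n = M then (1 : Fin 2) else zcons d (cons 1 (periodicPoint r s)) n

lemma tgt_ne (r s d M : ℕ) {n : ℕ} (h : n ≠ M) :
    tgt r s d M n = zcons d (cons 1 (periodicPoint r s)) n := if_neg h

lemma tgt_M (r s d M : ℕ) : tgt r s d M M = 1 := if_pos rfl

lemma Ocyl_open (r s d M : ℕ) :
    IsOpen {x : ℕ → Fin 2 | ∀ n ≤ M, x n = tgt r s d M n} := by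
  have e : {x : ℕ → Fin 2 | ∀ n ≤ M, x n = tgt r s d M n}
      = Set.pi (↑(Finset.range (M + 1))) (fun n => ({tgt r s d M n} : Set (Fin 2))) := by
    ext x
    simp [Set.mem_pi, Nat.lt_succ_iff]
  rw [e]
  exact isOpen_set_pi (Finset.range (M + 1)).finite_toSet (fun n _ => isOpen_discrete _)

lemma nonH_core (r s : ℕ) (hr : 3 ≤ r) (hsr : s + 1 < r)
    (b : ℕ → (ℕ → Fin 2) → (ℕ → Fin 2)) (hb : PinkPreRec r s b)
    (g : (ℕ → Fin 2) → (ℕ → Fin 2)) (d : ℕ)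
    (hg : ∀ w, g (zcons d (cons 1 w)) = zcons d (cons 1 (b r w))) :
    g (zcons d (cons 1 (periodicPoint r s))) = zcons d (cons 1 (periodicPoint r s)) ∧
    (∀ W : Set (ℕ → Fin 2), IsOpen W → zcons d (cons 1 (periodicPoint r s)) ∈ W →
      ¬ Set.EqOn g id W) ∧
    (∀ W : Set (ℕ → Fin 2), IsOpen W → zcons d (cons 1 (periodicPoint r s)) ∈ W →
      ∃ O : Set (ℕ → Fin 2), IsOpen O ∧ O.Nonempty ∧ O ⊆ W ∧ Set.EqOn g id O) := by
  have hm : 2 ≤ r - s := by omega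
  refine ⟨?_, ?_, ?_⟩
  · rw [hg, b_r_fix r s b hb hm hsr]
  · -- not identity on any neighborhood
    intro W hW hxW heq
    obtain ⟨N, hN⟩ := cyl hW hxW
    have hNm : N ≤ N * (r - s) := Nat.le_mul_of_pos_right N (by omega)
    have hyW : zcons d (cons 1 ((blk r s)^[N] zfun)) ∈ W := by
      apply hN
      intro n hn
      rcases lt_trichotomy n d with h | h | h
      · rw [zc1_lt h, zc1_lt h]
      · subst h; rw [zc1_eq, zc1_eq]
      · rw [zc1_gt h, zc1_gt h, blk_iter_lt r s hm N zfun _ (by omega)]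
    have heval := congrFun (heq hyW) (d + 1 + N * (r - s) + (r - 1))
    rw [id_eq, hg, blk_iter_comm r s b hb hsr] at heval
    have hdn : d < d + 1 + N * (r - s) + (r - 1) := by omega
    rw [zc1_gt hdn, zc1_gt hdn,
      show d + 1 + N * (r - s) + (r - 1) - d - 1 = N * (r - s) + (r - 1) from by omega,
      blk_iter_ge r s hm, blk_iter_ge r s hm, bz r s b hb hr] at heval
    rw [show zfun (r - 1) = 0 from rfl] at heval
    exact absurd heval (by decide)
  · -- identity on a nonempty open subset of any neighborhood
    intro W hW hxW
    obtain ⟨N, hN⟩ := cyl hW hxW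
    have hNm : N ≤ N * (r - s) := Nat.le_mul_of_pos_right N (by omega)
    refine ⟨{x : ℕ → Fin 2 | ∀ n ≤ d + 1 + N * (r - s), x n = tgt r s d (d + 1 + N * (r - s)) n},
      Ocyl_open r s d _, ?_, ?_, ?_⟩
    · -- nonempty
      refine ⟨zcons d (cons 1 ((blk r s)^[N] (cons 1 zfun))), ?_⟩
      intro n hn
      rcases lt_trichotomy n d with h | h | h
      · rw [tgt_ne r s d _ (by omega), zc1_lt h, zc1_lt h]
      · subst h; rw [tgt_ne r s _ _ (by omega), zc1_eq, zc1_eq]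
      · by_cases hM : n = d + 1 + N * (r - s)
        · subst hM
          rw [tgt_M, zc1_gt h,
            show d + 1 + N * (r - s) - d - 1 = N * (r - s) + 0 from by omega,
            blk_iter_ge r s hm]
          rfl
        · rw [tgt_ne r s d _ hM, zc1_gt h, zc1_gt h,
            blk_iter_lt r s hm N _ _ (by omega)]
    · -- subset of W
      intro x hx
      apply hN
      intro n hn
      have := hx n (by omega)
      rwa [tgt_ne r s d _ (by omega)] at this
    · -- EqOn
      intro x hx
      have hxeq : x = zcons d (cons 1 ((blk r s)^[N]
          (cons 1 (fun t => x (d + 1 + N * (r - s) + 1 + t))))) := by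
        funext n
        rcases lt_trichotomy n d with h | h | h
        · rw [zc1_lt h]
          have := hx n (by omega)
          rwa [tgt_ne r s d _ (by omega), zc1_lt h] at this
        · subst h
          rw [zc1_eq]
          have := hx n (by omega)
          rwa [tgt_ne r s n _ (by omega), zc1_eq] at this
        · rcases lt_trichotomy n (d + 1 + N * (r - s)) with hM | hM | hM
          · rw [zc1_gt h, blk_iter_lt r s hm N _ _ (by omega)]
            have := hx n (by omega)
            rwa [tgt_ne r s d _ (by omega), zc1_gt h] at this
          · subst hM
            rw [zc1_gt h, show d + 1 + N * (r - s) - d - 1 = N * (r - s) + 0 from by omega,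
              blk_iter_ge r s hm]
            have := hx (d + 1 + N * (r - s)) le_rfl
            rw [tgt_M] at this
            exact this
          · rw [zc1_gt (by omega),
              show n - d - 1 = N * (r - s) + (n - (d + 1 + N * (r - s))) from by omega,
              blk_iter_ge r s hm,
              show n - (d + 1 + N * (r - s)) = (n - (d + 1 + N * (r - s)) - 1) + 1 from by omega,
              cons_succ']
            show x n = x (d + 1 + N * (r - s) + 1 + (n - (d + 1 + N * (r - s)) - 1))
            congr 1
            omega
      rw [id_eq]
      conv_lhs => rw [hxeq]
      rw [hg, blk_iter_comm r s b hb hsr,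
        (hb.2.2.2.2 r (by omega) le_rfl (by omega)).2, ← hxeq]

end PinkAux

/-- For `r ≥ 3`, `1 ≤ s < r` with `r > s + 1`, every `b_i` with `s+1 ≤ i ≤ r` is a
non-Hausdorff element for the action of `H̃_r` on `{0,1}^ℕ`. In particular `b_r` fixes
the point `(0^{r-s-1}1)^∞`, is not the identity on any open neighborhood of this point,
and every open neighborhood of this point contains a nonempty open subset on which `b_r`
is the identity. -/
theorem stmt11 (r s : ℕ) (hr : 3 ≤ r) (hs : 1 ≤ s) (hsr : s + 1 < r)
    (b : ℕ → (ℕ → Fin 2) → (ℕ → Fin 2)) (hb : PinkPreRec r s b) :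
    (∀ i, s + 1 ≤ i → i ≤ r → IsNonHausdorffElement (b i)) ∧
    b r (periodicPoint r s) = periodicPoint r s ∧
    (∀ W : Set (ℕ → Fin 2), IsOpen W → periodicPoint r s ∈ W →
      ¬ Set.EqOn (b r) id W) ∧
    (∀ W : Set (ℕ → Fin 2), IsOpen W → periodicPoint r s ∈ W →
      ∃ O : Set (ℕ → Fin 2), IsOpen O ∧ O.Nonempty ∧ O ⊆ W ∧ Set.EqOn (b r) id O) := by
  have hm : 2 ≤ r - s := by omega
  obtain ⟨c1, c2, c3⟩ := PinkAux.nonH_core r s hr hsr b hb (b r) (r - s - 1)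
    (PinkAux.b_blk r s b hb r (by omega) le_rfl)
  rw [PinkAux.p_blk r s hm] at c1 c2 c3
  refine ⟨fun i h1 h2 => ?_, c1, c2, c3⟩
  exact ⟨PinkAux.zcons (i - s - 1) (cons 1 (periodicPoint r s)),
    PinkAux.nonH_core r s hr hsr b hb (b i) (i - s - 1) (PinkAux.b_blk r s b hb i h1 h2)⟩
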